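/- The direct sum of two semi-stable cokernels is a semi-stable cokernel. -/
import Mathlib

open CategoryTheory CategoryTheory.Limits ZeroObject

universe v u

variable {𝒞 : Type u} [Category.{v} 𝒞] [Preadditive 𝒞] [HasZeroObject 𝒞] [HasBinaryBiproducts 𝒞]

/-- `d` is a cokernel of some morphism. -/
def IsCokernelOfSome {B X : 𝒞} (d : B ⟶ X) : Prop :=
  ∃ (A : 𝒞) (f : A ⟶ B) (w : f ≫ d = 0), Nonempty (IsColimit (CokernelCofork.ofπ d w))

/-- `i` is a kernel of some morphism. -/
def IsKernelOfSome {A B : 𝒞} (i : A ⟶ B) : Prop :=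
  ∃ (X : 𝒞) (f : B ⟶ X) (w : i ≫ f = 0), Nonempty (IsLimit (KernelFork.ofι i w))

/-- A semi-stable cokernel: a cokernel whose pullback along every morphism exists
and is again a cokernel. -/
def IsSemiStableCokernel {B X : 𝒞} (d : B ⟶ X) : Prop :=
  IsCokernelOfSome d ∧ ∀ (C' : 𝒞) (h : C' ⟶ X), ∃ (B' : 𝒞) (g : B' ⟶ B) (d' : B' ⟶ C'),
    IsPullback g d' d h ∧ IsCokernelOfSome d'

/-- A semi-stable kernel: a kernel whose pushout along every morphism exists
and is again a kernel. -/
def IsSemiStableKernel {A B : 𝒞} (i : A ⟶ B) : Prop :=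
  IsKernelOfSome i ∧ ∀ (A' : 𝒞) (h : A ⟶ A'), ∃ (P : 𝒞) (g : B ⟶ P) (i' : A' ⟶ P),
    IsPushout i h g i' ∧ IsKernelOfSome i'

/-- A cokernel of some morphism is an epimorphism. -/
theorem IsCokernelOfSome.epi {B X : 𝒞} {d : B ⟶ X} (h : IsCokernelOfSome d) : Epi d := by
  obtain ⟨A, f, w, ⟨hc⟩⟩ := h
  exact ⟨fun u v huv => Cofork.IsColimit.hom_ext hc (by simpa using huv)⟩

/-- `IsCokernelOfSome` is stable under precomposition with an isomorphism. -/
theorem IsCokernelOfSome.iso_comp {B' B X : 𝒞} (i : B' ≅ B) {d : B ⟶ X}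
    (h : IsCokernelOfSome d) : IsCokernelOfSome (i.hom ≫ d) := by
  obtain ⟨A, f, w, ⟨hc⟩⟩ := h
  have : Epi d := IsCokernelOfSome.epi ⟨A, f, w, ⟨hc⟩⟩
  have : Epi (i.hom ≫ d) := epi_comp _ _
  refine ⟨A, f ≫ i.inv, by simp [w], ⟨CokernelCofork.IsColimit.ofπ' _ _ ?_⟩⟩
  intro W k hk
  have hk' : f ≫ (i.inv ≫ k) = 0 := by simpa using hk
  obtain ⟨l, hl⟩ := CokernelCofork.IsColimit.desc' hc (i.inv ≫ k) hk'
  exact ⟨l, by simp at hl; simp [Category.assoc, hl]⟩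

/-- The pullback of a semi-stable cokernel (in any pullback square) is a semi-stable cokernel. -/
theorem IsSemiStableCokernel.of_isPullback {B X B'' C'' : 𝒞} {d : B ⟶ X} {g : B'' ⟶ B}
    {d'' : B'' ⟶ C''} {h : C'' ⟶ X} (hd : IsSemiStableCokernel d)
    (sq : IsPullback g d'' d h) : IsSemiStableCokernel d'' := by
  constructor
  · obtain ⟨B₃, g₃, d₃, sq₃, hc₃⟩ := hd.2 C'' h
    have hiso := IsPullback.isoIsPullback_hom_snd B C'' sq sq₃
    rw [show d'' = (sq.isoIsPullback B C'' sq₃).hom ≫ d₃ from hiso.symm]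
    exact hc₃.iso_comp (sq.isoIsPullback B C'' sq₃)
  · intro Z k
    obtain ⟨Q, g₂, e₂, sq₂, hc₂⟩ := hd.2 Z (k ≫ h)
    exact ⟨Q, _, e₂, IsPullback.of_right' sq₂ sq, hc₂⟩

/-- The composition of two semi-stable cokernels is a cokernel of some morphism. -/
theorem IsSemiStableCokernel.comp_isCokernelOfSome {P Q R : 𝒞} {e : P ⟶ Q} {f : Q ⟶ R}
    (he : IsSemiStableCokernel e) (hf : IsSemiStableCokernel f) :
    IsCokernelOfSome (e ≫ f) := by
  obtain ⟨A, a, wa, ⟨hca⟩⟩ := he.1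
  obtain ⟨A', b, wb, ⟨hcb⟩⟩ := hf.1
  obtain ⟨Q', g, e', sq, hce'⟩ := he.2 A' b
  have hge : g ≫ e = e' ≫ b := sq.w
  have : Epi e' := hce'.epi
  have : Epi e := he.1.epi
  have : Epi f := hf.1.epi
  have : Epi (e ≫ f) := epi_comp _ _
  have w0 : biprod.desc a g ≫ (e ≫ f) = 0 := by
    apply biprod.hom_ext'
    · rw [biprod.inl_desc_assoc, reassoc_of% wa, comp_zero, zero_comp]
    · rw [biprod.inr_desc_assoc, reassoc_of% hge, wb, comp_zero, comp_zero]
  refine ⟨A ⊞ Q', biprod.desc a g, w0, ⟨CokernelCofork.IsColimit.ofπ' _ _ ?_⟩⟩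
  intro W k hk
  have hak : a ≫ k = 0 := by
    have := biprod.inl ≫= hk
    simpa using this
  have hgk : g ≫ k = 0 := by
    have := biprod.inr ≫= hk
    simpa using this
  obtain ⟨u, hu⟩ := CokernelCofork.IsColimit.desc' hca k hak
  simp only [Cofork.π_ofπ] at hu
  have hbu : b ≫ u = 0 := by
    rw [← cancel_epi e', reassoc_of% hge.symm, hu, hgk, comp_zero]
  obtain ⟨v, hv⟩ := CokernelCofork.IsColimit.desc' hcb u hbu
  simp only [Cofork.π_ofπ] at hv
  exact ⟨v, by rw [Category.assoc, hv, hu]⟩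

theorem stmt8 {B X B' C' : 𝒞} (d : B ⟶ X) (d' : B' ⟶ C')
    (hd : IsSemiStableCokernel d) (hd' : IsSemiStableCokernel d') :
    IsSemiStableCokernel (biprod.map d d') := by
  constructor
  · -- `biprod.map d d'` is a cokernel of `biprod.map f f'`
    obtain ⟨A, f, wf, ⟨hcf⟩⟩ := hd.1
    obtain ⟨A', f', wf', ⟨hcf'⟩⟩ := hd'.1
    have : Epi d := hd.1.epi
    have : Epi d' := hd'.1.epi
    have : Epi (biprod.map d d') := by
      constructor
      intro W u v huv
      apply biprod.hom_ext'
      · rw [← cancel_epi d, ← biprod.inl_map_assoc d d' u, huv, biprod.inl_map_assoc]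
      · rw [← cancel_epi d', ← biprod.inr_map_assoc d d' u, huv, biprod.inr_map_assoc]
    have w0 : biprod.map f f' ≫ biprod.map d d' = 0 := by
      apply biprod.hom_ext'
      · rw [biprod.inl_map_assoc, biprod.inl_map, reassoc_of% wf, zero_comp, comp_zero]
      · rw [biprod.inr_map_assoc, biprod.inr_map, reassoc_of% wf', zero_comp, comp_zero]
    refine ⟨A ⊞ A', biprod.map f f', w0, ⟨CokernelCofork.IsColimit.ofπ' _ _ ?_⟩⟩
    intro W k hk
    have hk1 : f ≫ biprod.inl ≫ k = 0 := by
      have := biprod.inl ≫= hk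
      simpa [biprod.inl_map_assoc] using this
    have hk2 : f' ≫ biprod.inr ≫ k = 0 := by
      have := biprod.inr ≫= hk
      simpa [biprod.inr_map_assoc] using this
    obtain ⟨u, hu⟩ := CokernelCofork.IsColimit.desc' hcf (biprod.inl ≫ k) hk1
    obtain ⟨u', hu'⟩ := CokernelCofork.IsColimit.desc' hcf' (biprod.inr ≫ k) hk2
    simp only [Cofork.π_ofπ] at hu hu'
    refine ⟨biprod.desc u u', ?_⟩
    apply biprod.hom_ext'
    · rw [biprod.inl_map_assoc, biprod.inl_desc, hu]
    · rw [biprod.inr_map_assoc, biprod.inr_desc, hu']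
  · -- pullbacks exist and are cokernels
    intro Z h
    obtain ⟨P₁, g₁, e₁, sq₁, hc₁⟩ := hd.2 Z (h ≫ biprod.fst)
    have ss₁ : IsSemiStableCokernel e₁ := hd.of_isPullback sq₁
    obtain ⟨P₂, g₂, e₂, sq₂, hc₂⟩ := hd'.2 P₁ (e₁ ≫ h ≫ biprod.snd)
    have ss₂ : IsSemiStableCokernel e₂ := hd'.of_isPullback sq₂
    have w1 : g₁ ≫ d = e₁ ≫ h ≫ biprod.fst := sq₁.w
    have w2 : g₂ ≫ d' = e₂ ≫ e₁ ≫ h ≫ biprod.snd := sq₂.w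
    refine ⟨P₂, biprod.lift (e₂ ≫ g₁) g₂, e₂ ≫ e₁, ?_, ss₂.comp_isCokernelOfSome ss₁⟩
    have comm : biprod.lift (e₂ ≫ g₁) g₂ ≫ biprod.map d d' = (e₂ ≫ e₁) ≫ h := by
      apply biprod.hom_ext
      · rw [Category.assoc, biprod.map_fst, biprod.lift_fst_assoc, Category.assoc, w1,
          Category.assoc, Category.assoc]
      · rw [Category.assoc, biprod.map_snd, biprod.lift_snd_assoc, w2,
          Category.assoc, Category.assoc]
    have pf1 : ∀ s : PullbackCone (biprod.map d d') h,
        (s.fst ≫ biprod.fst) ≫ d = s.snd ≫ h ≫ biprod.fst := fun s => by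
      simpa only [Category.assoc, biprod.map_fst] using s.condition =≫ biprod.fst
    set l₁ : ∀ s : PullbackCone (biprod.map d d') h, s.pt ⟶ P₁ :=
      fun s => sq₁.lift (s.fst ≫ biprod.fst) s.snd (pf1 s) with hl₁
    have pf2 : ∀ s : PullbackCone (biprod.map d d') h,
        (s.fst ≫ biprod.snd) ≫ d' = l₁ s ≫ e₁ ≫ h ≫ biprod.snd := fun s => by
      have hc : (s.fst ≫ biprod.snd) ≫ d' = s.snd ≫ h ≫ biprod.snd := by
        simpa only [Category.assoc, biprod.map_snd] using s.condition =≫ biprod.snd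
      simp only [hl₁]
      rw [hc]
      conv_rhs => rw [← Category.assoc, sq₁.lift_snd]
    set l₂ : ∀ s : PullbackCone (biprod.map d d') h, s.pt ⟶ P₂ :=
      fun s => sq₂.lift (s.fst ≫ biprod.snd) (l₁ s) (pf2 s) with hl₂
    refine IsPullback.of_isLimit (PullbackCone.IsLimit.mk comm l₂ (fun s => ?_) (fun s => ?_)
      (fun s m hm1 hm2 => ?_))
    · apply biprod.hom_ext
      · simp only [hl₁, hl₂]
        rw [Category.assoc, biprod.lift_fst, ← Category.assoc, sq₂.lift_snd, sq₁.lift_fst]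
      · simp only [hl₁, hl₂]
        rw [Category.assoc, biprod.lift_snd, sq₂.lift_fst]
    · simp only [hl₁, hl₂]
      rw [← Category.assoc, sq₂.lift_snd, sq₁.lift_snd]
    · have h1 : m ≫ e₂ ≫ g₁ = s.fst ≫ biprod.fst := by
        simpa only [Category.assoc, biprod.lift_fst] using hm1 =≫ biprod.fst
      have h2 : m ≫ g₂ = s.fst ≫ biprod.snd := by
        simpa only [Category.assoc, biprod.lift_snd] using hm1 =≫ biprod.snd
      have hme : m ≫ e₂ = l₁ s := by
        apply sq₁.hom_ext
        · simp only [hl₁]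
          rw [sq₁.lift_fst, Category.assoc]
          exact h1
        · simp only [hl₁]
          rw [sq₁.lift_snd, Category.assoc]
          exact hm2
      apply sq₂.hom_ext
      · simp only [hl₂]
        rw [sq₂.lift_fst]
        exact h2
      · simp only [hl₂]
        rw [sq₂.lift_snd]
        exact hme
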